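/- Let q₁, q₂, q₁′, q₂′ ≥ 0 with q₁ + q₂ ≤ 1 and q₁′ + q₂′ ≤ 1, and let r₃ ∈ [−1, 1]. Then ∑_{i=1}^{2} 2qᵢqᵢ′ / (qᵢ(1 + r₃) + qᵢ′(1 − r₃)) ≤ 1, where each summand with zero denominator is interpreted as 0. Equality holds when q₁ = q₁′ = 1 − q₂ = 1 − q₂′. -/

import Mathlib

/-! The summand `2ab/(as + bt)` is a weighted harmonic mean; when `s + t = 2` it is bounded by
the "crossed" arithmetic mean `(at + bs)/2`, since `(as + bt)(at + bs) - ab(s + t)² = st(a - b)²`.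
Summing the two crossed means and using `q₁ + q₂ ≤ 1`, `q₁′ + q₂′ ≤ 1` gives at most
`((1 - r₃) + (1 + r₃))/2 = 1`. -/

lemma mul_mul_add_sq_le_mul {a b s t : ℝ} (hs : 0 ≤ s) (ht : 0 ≤ t) :
    a * b * (s + t) ^ 2 ≤ (a * s + b * t) * (a * t + b * s) := by
  nlinarith [mul_nonneg (mul_nonneg hs ht) (sq_nonneg (a - b))]

lemma two_mul_mul_div_le_of_add_eq_two {a b s t : ℝ} (ha : 0 ≤ a) (hb : 0 ≤ b)
    (hs : 0 ≤ s) (ht : 0 ≤ t) (hst : s + t = 2) :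
    2 * a * b / (a * s + b * t) ≤ (a * t + b * s) / 2 := by
  have hden : 0 ≤ a * s + b * t := by positivity
  rcases hden.eq_or_lt with hzero | hpos
  · rw [← hzero, div_zero]
    positivity
  · rw [div_le_iff₀ hpos]
    have := mul_mul_add_sq_le_mul (a := a) (b := b) hs ht
    rw [hst] at this
    linarith

lemma two_mul_self_div_of_add_eq_two (a : ℝ) {s t : ℝ} (hst : s + t = 2) :
    2 * a * a / (a * s + a * t) = a := by
  rw [← mul_add, hst]
  rcases eq_or_ne a 0 with rfl | ha
  · simp
  · field_simp

theorem stmt16 (q1 q2 q1' q2' r3 : ℝ)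
    (hq1 : 0 ≤ q1) (hq2 : 0 ≤ q2) (hq1' : 0 ≤ q1') (hq2' : 0 ≤ q2')
    (hs : q1 + q2 ≤ 1) (hs' : q1' + q2' ≤ 1) (hr : r3 ∈ Set.Icc (-1 : ℝ) 1) :
    2*q1*q1' / (q1*(1 + r3) + q1'*(1 - r3))
      + 2*q2*q2' / (q2*(1 + r3) + q2'*(1 - r3)) ≤ 1
    ∧ (q1 = q1' → q1 = 1 - q2 → q1 = 1 - q2' →
        2*q1*q1' / (q1*(1 + r3) + q1'*(1 - r3))
          + 2*q2*q2' / (q2*(1 + r3) + q2'*(1 - r3)) = 1) := by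
  have hplus : 0 ≤ 1 + r3 := by linarith [hr.1]
  have hminus : 0 ≤ 1 - r3 := by linarith [hr.2]
  have hsum : (1 + r3) + (1 - r3) = 2 := by ring
  refine ⟨?_, fun hdiag hcompl hcompl' => ?_⟩
  · have bound1 := two_mul_mul_div_le_of_add_eq_two hq1 hq1' hplus hminus hsum
    have bound2 := two_mul_mul_div_le_of_add_eq_two hq2 hq2' hplus hminus hsum
    have crossed_means_le : (q1 * (1 - r3) + q1' * (1 + r3)) / 2
        + (q2 * (1 - r3) + q2' * (1 + r3)) / 2 ≤ 1 := by
      nlinarith [mul_le_mul_of_nonneg_right hs hminus, mul_le_mul_of_nonneg_right hs' hplus]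
    linarith
  · obtain rfl : q2' = q2 := by linarith
    subst hdiag
    rw [two_mul_self_div_of_add_eq_two q1 hsum, two_mul_self_div_of_add_eq_two q2' hsum]
    linarith
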